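/- Let H be a real Hilbert space, t₀ ≤ t₁ real numbers, b, u : [t₀, t₁] → H continuously differentiable, and ε > 0. Then ∫_{t₀}^{t₁} ⟨b(s), u'(s)⟩ ds ≤ (1/(4ε)) sup_{s ∈ [t₀,t₁]} ‖u(s)‖² + 8ε ‖b(t₀)‖² + 8ε (t₁ − t₀) ∫_{t₀}^{t₁} ‖b'(s)‖² ds. -/

import Mathlib

/-!
Integrating by parts moves the time derivative from `u` to `b`, leaving the boundary terms
`⟪b t₁, u t₁⟫ - ⟪b t₀, u t₀⟫` and `-∫ ⟪b', u⟫`. With `m² = sup ‖u‖²` and `I = ∫ ‖b'‖`, each of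
them is bounded through Cauchy–Schwarz and `‖b t₁‖ ≤ ‖b t₀‖ + I`, giving `2 m (‖b t₀‖ + I)` in
total. Young's inequality with weight `4ε`, `(x + y)² ≤ 2x² + 2y²` and the integral
Cauchy–Schwarz inequality `I² ≤ (t₁ - t₀) ∫ ‖b'‖²` then produce the stated right-hand side.
-/

open RealInnerProductSpace MeasureTheory intervalIntegral Set
open scoped Interval

theorem two_mul_le_sq_div_add_mul_sq {δ : ℝ} (hδ : 0 < δ) (a b : ℝ) :
    2 * a * b ≤ a ^ 2 / δ + δ * b ^ 2 := by
  rw [div_add' _ _ _ hδ.ne', le_div_iff₀ hδ]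
  nlinarith [sq_nonneg (a - δ * b)]

theorem IsCompact.le_iSup_of_continuousOn {X : Type*} [TopologicalSpace X] {K : Set X}
    (hK : IsCompact K) {f : X → ℝ} (hf : ContinuousOn f K) {x : X} (hx : x ∈ K) :
    f x ≤ ⨆ s : K, f s :=
  le_ciSup (image_eq_range f K ▸ hK.bddAbove_image hf) ⟨x, hx⟩

theorem sq_integral_le_mul_integral_sq {f : ℝ → ℝ} {a b : ℝ} (hab : a ≤ b)
    (hf : IntervalIntegrable f volume a b)
    (hf2 : IntervalIntegrable (fun s => f s ^ 2) volume a b) :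
    (∫ s in a..b, f s) ^ 2 ≤ (b - a) * ∫ s in a..b, f s ^ 2 := by
  have hquad : ∀ c : ℝ,
      0 ≤ (b - a) * (c * c) + (-2 * ∫ s in a..b, f s) * c + ∫ s in a..b, f s ^ 2 := by
    intro c
    have hexpand : ∫ s in a..b, (f s - c) ^ 2 =
        (b - a) * (c * c) + (-2 * ∫ s in a..b, f s) * c + ∫ s in a..b, f s ^ 2 := by
      simp only [sub_sq]
      rw [integral_add (hf2.sub (hf.const_mul 2 |>.mul_const c)) intervalIntegrable_const,
        integral_sub hf2 (hf.const_mul 2 |>.mul_const c), intervalIntegral.integral_mul_const,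
        intervalIntegral.integral_const_mul, intervalIntegral.integral_const, smul_eq_mul]
      ring
    exact hexpand ▸ integral_nonneg hab fun s _ => sq_nonneg _
  have := discrim_le_zero hquad
  rw [discrim] at this
  linarith

section Hilbert

variable {H : Type*} [NormedAddCommGroup H] [InnerProductSpace ℝ H] {a b : ℝ}

theorem integral_inner_deriv_eq_sub {f f' g g' : ℝ → H}
    (hf : ∀ s ∈ [[a, b]], HasDerivAt f (f' s) s) (hg : ∀ s ∈ [[a, b]], HasDerivAt g (g' s) s)
    (hfg' : IntervalIntegrable (fun s => ⟪f s, g' s⟫) volume a b)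
    (hf'g : IntervalIntegrable (fun s => ⟪f' s, g s⟫) volume a b) :
    ∫ s in a..b, ⟪f s, g' s⟫ = ⟪f b, g b⟫ - ⟪f a, g a⟫ - ∫ s in a..b, ⟪f' s, g s⟫ := by
  rw [← integral_eq_sub_of_hasDerivAt (fun s hs => (hf s hs).inner ℝ (hg s hs))
    (hfg'.add hf'g), integral_add hfg' hf'g]
  ring

theorem norm_integral_inner_le_mul_integral_norm {f g : ℝ → H} {m : ℝ} (hab : a ≤ b)
    (hf : ContinuousOn f (Icc a b)) (hgm : ∀ s ∈ Icc a b, ‖g s‖ ≤ m) :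
    ‖∫ s in a..b, ⟪f s, g s⟫‖ ≤ m * ∫ s in a..b, ‖f s‖ := by
  rw [← intervalIntegral.integral_const_mul]
  refine norm_integral_le_of_norm_le hab (ae_of_all _ fun s hs => ?_) ?_
  · calc ‖⟪f s, g s⟫‖ ≤ ‖f s‖ * ‖g s‖ := norm_inner_le_norm _ _
      _ ≤ ‖f s‖ * m := by gcongr; exact hgm s (Ioc_subset_Icc_self hs)
      _ = m * ‖f s‖ := mul_comm _ _
  · exact (hf.norm.mono (uIcc_of_le hab).subset).intervalIntegrable.const_mul m

theorem norm_sub_le_integral_norm_deriv [CompleteSpace H] {f f' : ℝ → H} (hab : a ≤ b)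
    (hf : ∀ s ∈ [[a, b]], HasDerivAt f (f' s) s) (hf' : IntervalIntegrable f' volume a b) :
    ‖f b - f a‖ ≤ ∫ s in a..b, ‖f' s‖ := by
  rw [← integral_eq_sub_of_hasDerivAt hf hf']
  exact norm_integral_le_integral_norm hab

theorem integral_inner_deriv_le_two_mul [CompleteSpace H] {f f' g g' : ℝ → H} {m : ℝ}
    (hab : a ≤ b) (hf : ∀ s ∈ Icc a b, HasDerivAt f (f' s) s) (hf' : ContinuousOn f' (Icc a b))
    (hg : ∀ s ∈ Icc a b, HasDerivAt g (g' s) s) (hg' : ContinuousOn g' (Icc a b))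
    (hgm : ∀ s ∈ Icc a b, ‖g s‖ ≤ m) :
    ∫ s in a..b, ⟪f s, g' s⟫ ≤ 2 * m * (‖f a‖ + ∫ s in a..b, ‖f' s‖) := by
  have hfc : ContinuousOn f (Icc a b) := fun s hs => (hf s hs).continuousAt.continuousWithinAt
  have hgc : ContinuousOn g (Icc a b) := fun s hs => (hg s hs).continuousAt.continuousWithinAt
  have hga := hgm a ⟨le_rfl, hab⟩
  have hgb := hgm b ⟨hab, le_rfl⟩
  have hm : 0 ≤ m := (norm_nonneg _).trans hga
  rw [← uIcc_of_le hab] at hf hf' hg hg' hfc hgc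
  have hfb : ‖f b‖ ≤ ‖f a‖ + ∫ s in a..b, ‖f' s‖ :=
    (norm_le_norm_add_norm_sub' _ _).trans
      (add_le_add_right (norm_sub_le_integral_norm_deriv hab hf hf'.intervalIntegrable) _)
  have hend_b : ⟪f b, g b⟫ ≤ (‖f a‖ + ∫ s in a..b, ‖f' s‖) * m :=
    (real_inner_le_norm _ _).trans (mul_le_mul hfb hgb (norm_nonneg _) (hfb.trans' (norm_nonneg _)))
  have hend_a : -⟪f a, g a⟫ ≤ ‖f a‖ * m :=
    (neg_le_abs _).trans ((abs_real_inner_le_norm _ _).trans (by gcongr))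
  have hbulk : -∫ s in a..b, ⟪f' s, g s⟫ ≤ m * ∫ s in a..b, ‖f' s‖ :=
    (neg_le_abs _).trans
      (norm_integral_inner_le_mul_integral_norm hab (uIcc_of_le hab ▸ hf') hgm)
  rw [integral_inner_deriv_eq_sub hf hg (hfc.inner hg').intervalIntegrable
    (hf'.inner hgc).intervalIntegrable]
  linarith

end Hilbert

/-- The bound on the load term `T₁ = ∫ ⟨b, ∂ₜu⟩` in the stability proof: for continuously
differentiable Hilbert-space-valued `b, u` and every `ε > 0`,
`∫_{t₀}^{t₁} ⟨b, u'⟩ ≤ (1/(4ε)) sup_{[t₀,t₁]} ‖u‖² + 8ε ‖b(t₀)‖² + 8ε (t₁−t₀) ∫_{t₀}^{t₁} ‖b'‖²`. -/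
theorem load_term_young_estimate
    {H : Type*} [NormedAddCommGroup H] [InnerProductSpace ℝ H] [CompleteSpace H]
    (t₀ t₁ : ℝ) (h01 : t₀ ≤ t₁) (b b' u u' : ℝ → H)
    (hb : ∀ s ∈ Set.Icc t₀ t₁, HasDerivAt b (b' s) s)
    (hb' : ContinuousOn b' (Set.Icc t₀ t₁))
    (hu : ∀ s ∈ Set.Icc t₀ t₁, HasDerivAt u (u' s) s)
    (hu' : ContinuousOn u' (Set.Icc t₀ t₁))
    (ε : ℝ) (hε : 0 < ε) :
    ∫ s in t₀..t₁, ⟪b s, u' s⟫ ≤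
      (1 / (4 * ε)) * (⨆ s : Set.Icc t₀ t₁, ‖u (s : ℝ)‖ ^ 2) +
        8 * ε * ‖b t₀‖ ^ 2 + 8 * ε * (t₁ - t₀) * ∫ s in t₀..t₁, ‖b' s‖ ^ 2 := by
  set M := ⨆ s : Set.Icc t₀ t₁, ‖u (s : ℝ)‖ ^ 2
  set I := ∫ s in t₀..t₁, ‖b' s‖
  have hM : 0 ≤ M := Real.iSup_nonneg fun s => sq_nonneg _
  have hu_cont : ContinuousOn u (Icc t₀ t₁) := fun s hs =>
    (hu s hs).continuousAt.continuousWithinAt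
  have huM : ∀ s ∈ Icc t₀ t₁, ‖u s‖ ≤ √M := fun s hs => by
    simpa using Real.abs_le_sqrt (isCompact_Icc.le_iSup_of_continuousOn (hu_cont.norm.pow 2) hs)
  have hb'_cont : ContinuousOn (fun s => ‖b' s‖) [[t₀, t₁]] := uIcc_of_le h01 ▸ hb'.norm
  have hCS : I ^ 2 ≤ (t₁ - t₀) * ∫ s in t₀..t₁, ‖b' s‖ ^ 2 :=
    sq_integral_le_mul_integral_sq h01 hb'_cont.intervalIntegrable
      (hb'_cont.pow 2).intervalIntegrable
  calc ∫ s in t₀..t₁, ⟪b s, u' s⟫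
      ≤ 2 * √M * (‖b t₀‖ + I) := integral_inner_deriv_le_two_mul h01 hb hb' hu hu' huM
    _ ≤ √M ^ 2 / (4 * ε) + 4 * ε * (‖b t₀‖ + I) ^ 2 :=
      two_mul_le_sq_div_add_mul_sq (by positivity) _ _
    _ ≤ _ := by
      rw [Real.sq_sqrt hM, one_div_mul_eq_div]
      nlinarith [add_sq_le (a := ‖b t₀‖) (b := I)]
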